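/- Let 1 ≤ k ≤ l ≤ r ≤ n, let A, B ∈ [n]^(r), let D = A ∩ B with |D| = l, and let 𝒞 be a family of subsets of [n] each of size at most r−k+1. Suppose that the family ℰ = 𝒞 ∪ {A, B} is intersecting and that |𝒞⟨1⟩| = α^(r−k+1). Then D ∩ 𝒞⟨1⟩ ≠ ∅. -/

import Mathlib

open Finset

/-- The ground set `[n] = {1, …, n}`. -/
def grd (n : ℕ) : Finset ℕ := Finset.Icc 1 n

/-- `[n]^(k)`: all `k`-element subsets of `[n]`. -/
def ksets (n k : ℕ) : Finset (Finset ℕ) := (grd n).powersetCard k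

/-- A family of sets is intersecting if any two of its members meet. -/
def IsIntersecting (𝒜 : Finset (Finset ℕ)) : Prop :=
  ∀ A ∈ 𝒜, ∀ B ∈ 𝒜, (A ∩ B).Nonempty

/-- `𝒜⟨k⟩`: the collection of `k`-sets arising as pairwise intersections of members of `𝒜`. -/
def interk (𝒜 : Finset (Finset ℕ)) (k : ℕ) : Finset (Finset ℕ) :=
  ((𝒜 ×ˢ 𝒜).image fun p => p.1 ∩ p.2).filter fun C => C.card = k

/-- `𝒜⟨1⟩` identified with a set of points: all `x` with `{x} = A ∩ B` for some `A, B ∈ 𝒜`. -/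
def interPts (𝒜 : Finset (Finset ℕ)) : Finset ℕ :=
  (interk 𝒜 1).sup id

/-- `β(n,r,k)`: the maximum of `|𝒜⟨k⟩|` over intersecting families `𝒜 ⊆ [n]^(r)`. -/
noncomputable def beta (n r k : ℕ) : ℕ :=
  sSup {m | ∃ 𝒜 ⊆ ksets n r, IsIntersecting 𝒜 ∧ (interk 𝒜 k).card = m}

/-- `α^(r) = max {β(n,r,1) : n ≥ r}` (finite by Lovász's theorem). -/
noncomputable def alpha (r : ℕ) : ℕ :=
  sSup {m | ∃ n, r ≤ n ∧ beta n r 1 = m}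

/-!
If `A ∩ B` missed `𝒞⟨1⟩`, one could build an intersecting family of sets of size at most
`s = r - k + 1` with one more singleton intersection than `𝒞`: two copies of `𝒞`, partly retargeted,
plus a few new sets, chosen according to whether some pairwise intersection of `𝒞` lies inside
`A ∩ B` and whether some member of `𝒞` misses `A \ B` or `B \ A`. Padding its members with disjoint
blocks of fresh points makes it `s`-uniform without changing its pairwise intersections, which
contradicts the maximality of `α^(s)`. That `α^(s)` is a genuine maximum rests on Lovász's bound,
which follows from the Erdős–Rado sunflower lemma.
-/

open scoped Nat

section Sunflower

variable {α : Type*} [DecidableEq α]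

def IsSunflower (S : Finset (Finset α)) (Y : Finset α) : Prop :=
  (S : Set (Finset α)).Pairwise fun T T' => T ∩ T' = Y

lemma IsSunflower.subset_of_mem {S : Finset (Finset α)} {Y T : Finset α} (h : IsSunflower S Y)
    (hS : 1 < #S) (hT : T ∈ S) : Y ⊆ T := by
  obtain ⟨T', hT', hne⟩ := exists_mem_ne hS T
  rw [← h hT hT' hne.symm]
  exact inter_subset_left

lemma IsSunflower.mono {S S' : Finset (Finset α)} {Y : Finset α} (h : IsSunflower S Y)
    (hS' : S' ⊆ S) : IsSunflower S' Y :=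
  Set.Pairwise.mono (coe_subset.mpr hS') h

lemma IsSunflower.card_le_of_disjoint {S : Finset (Finset α)} {Y Z : Finset α}
    (h : IsSunflower S Y) (hZ : ∀ T ∈ S, (Z ∩ T).Nonempty) (hZY : Disjoint Z Y) :
    #S ≤ #Z := by
  obtain rfl | ⟨T₀, hT₀⟩ := S.eq_empty_or_nonempty
  · simp
  have : Nonempty α := ⟨(hZ T₀ hT₀).choose⟩
  choose! f hf using hZ
  refine card_le_card_of_injOn f (fun T hT => (mem_inter.mp (hf T hT)).1) ?_
  intro T hT T' hT' hfT
  by_contra hne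
  have hY : f T ∈ T ∩ T' :=
    mem_inter.mpr ⟨(mem_inter.mp (hf T hT)).2, hfT ▸ (mem_inter.mp (hf T' hT')).2⟩
  rw [h hT hT' hne] at hY
  exact disjoint_left.mp hZY (mem_inter.mp (hf T hT)).1 hY

lemma IsSunflower.image_insert {S : Finset (Finset α)} {Y : Finset α} {x : α}
    (h : IsSunflower S Y) :
    IsSunflower (S.image (insert x)) (insert x Y) := by
  rintro _ hT₁ _ hT₂ hne
  obtain ⟨T, hT, rfl⟩ := mem_image.mp hT₁
  obtain ⟨T', hT', rfl⟩ := mem_image.mp hT₂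
  rw [← insert_inter_distrib, h hT hT' fun hTT' => hne (by rw [hTT'])]

lemma exists_sunflower_empty_or_cover (F : Finset (Finset α)) (t w : ℕ)
    (hF : ∀ A ∈ F, A.Nonempty ∧ #A ≤ t) :
    (∃ S ⊆ F, #S = w + 1 ∧ IsSunflower S ∅) ∨ ∃ U, #U ≤ w * t ∧ ∀ A ∈ F, (A ∩ U).Nonempty := by
  classical
  obtain ⟨G, hG, hGmax⟩ := exists_max_image (F.powerset.filter fun G => IsSunflower G ∅) card
    ⟨∅, mem_filter.mpr ⟨empty_mem_powerset F, by simp [IsSunflower]⟩⟩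
  obtain ⟨hGF, hGdisj⟩ := mem_filter.mp hG
  rw [mem_powerset] at hGF
  by_cases hbig : w + 1 ≤ #G
  · obtain ⟨S, hSG, hS⟩ := exists_subset_card_eq hbig
    exact Or.inl ⟨S, hSG.trans hGF, hS, hGdisj.mono hSG⟩
  refine Or.inr ⟨G.biUnion id, ?_, fun A hA => ?_⟩
  · calc #(G.biUnion id) ≤ ∑ T ∈ G, #T := card_biUnion_le
      _ ≤ ∑ _T ∈ G, t := sum_le_sum fun T hT => (hF T (hGF hT)).2
      _ ≤ w * t := by rw [sum_const, smul_eq_mul]; gcongr; omega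
  by_contra hAU
  rw [not_nonempty_iff_eq_empty, ← disjoint_iff_inter_eq_empty] at hAU
  have hAG : A ∉ G := fun hAG => by
    obtain ⟨a, ha⟩ := (hF A hA).1
    exact disjoint_left.mp hAU ha (mem_biUnion.mpr ⟨A, hAG, ha⟩)
  have hins : insert A G ∈ F.powerset.filter fun G => IsSunflower G ∅ := by
    refine mem_filter.mpr ⟨mem_powerset.mpr (insert_subset hA hGF), ?_⟩
    rw [IsSunflower, coe_insert, Set.pairwise_insert]
    refine ⟨hGdisj, fun T hT _ => ?_⟩
    have hAT : Disjoint A T := hAU.mono_right (subset_biUnion_of_mem id hT)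
    exact ⟨disjoint_iff_inter_eq_empty.mp hAT, disjoint_iff_inter_eq_empty.mp hAT.symm⟩
  have := hGmax _ hins
  rw [card_insert_of_notMem hAG] at this
  omega

def link (F : Finset (Finset α)) (x : α) : Finset (Finset α) :=
  (F.filter (x ∈ ·)).image (·.erase x)

lemma mem_link {F : Finset (Finset α)} {x : α} {T : Finset α} :
    T ∈ link F x ↔ x ∉ T ∧ insert x T ∈ F := by
  constructor
  · rintro hT
    obtain ⟨A, hA, rfl⟩ := mem_image.mp hT
    rw [insert_erase (mem_filter.mp hA).2]
    exact ⟨notMem_erase x A, (mem_filter.mp hA).1⟩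
  · rintro ⟨hxT, hT⟩
    exact mem_image.mpr ⟨insert x T, mem_filter.mpr ⟨hT, mem_insert_self x T⟩, erase_insert hxT⟩

lemma card_link (F : Finset (Finset α)) (x : α) : #(link F x) = #(F.filter (x ∈ ·)) :=
  card_image_of_injOn fun A hA B hB hAB => by
    rw [← insert_erase (mem_filter.mp hA).2, ← insert_erase (mem_filter.mp hB).2]
    exact congrArg (insert x) hAB

lemma exists_sunflower_of_subset_link {F S : Finset (Finset α)} {x : α} {Y : Finset α}
    (hSF : S ⊆ link F x) (hSY : IsSunflower S Y) :
    ∃ S' ⊆ F, #S' = #S ∧ ∃ Y', IsSunflower S' Y' := by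
  have hxS : ∀ T ∈ S, x ∉ T := fun T hT => (mem_link.mp (hSF hT)).1
  refine ⟨S.image (insert x), fun _ hT₁ => ?_, card_image_of_injOn fun T hT T' hT' h => ?_,
    insert x Y, hSY.image_insert⟩
  · obtain ⟨T, hT, rfl⟩ := mem_image.mp hT₁
    exact (mem_link.mp (hSF hT)).2
  · rw [← erase_insert (hxS T hT), ← erase_insert (hxS T' hT')]
    exact congrArg (·.erase x) h

theorem exists_sunflower (s w : ℕ) (F : Finset (Finset α)) (hF : ∀ A ∈ F, #A = s)
    (hlt : s ! * w ^ s < #F) : ∃ S ⊆ F, #S = w + 1 ∧ ∃ Y, IsSunflower S Y := by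
  induction s generalizing F with
  | zero =>
    have := card_le_card fun A hA => mem_singleton.mpr (card_eq_zero.mp (hF A hA))
    rw [card_singleton] at this
    rw [Nat.factorial_zero, pow_zero, one_mul] at hlt
    omega
  | succ s ih =>
    rcases exists_sunflower_empty_or_cover F (s + 1) w
      (fun A hA => ⟨card_pos.mp (by rw [hF A hA]; omega), (hF A hA).le⟩) with
      ⟨S, hSF, hS, hSY⟩ | ⟨U, hU, hFU⟩
    · exact ⟨S, hSF, hS, ∅, hSY⟩
    obtain ⟨x, -, hx⟩ : ∃ x ∈ U, s ! * w ^ s < #(F.filter (x ∈ ·)) := by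
      refine exists_lt_of_sum_lt (lt_of_le_of_lt ?_ (lt_of_lt_of_le hlt ?_))
      · rw [sum_const, smul_eq_mul, Nat.factorial_succ]
        calc #U * (s ! * w ^ s) ≤ w * (s + 1) * (s ! * w ^ s) := by gcongr
          _ = (s + 1) * s ! * w ^ (s + 1) := by ring
      · refine (card_le_card fun A hA => ?_).trans card_biUnion_le
        obtain ⟨y, hy⟩ := hFU A hA
        exact mem_biUnion.mpr ⟨y, (mem_inter.mp hy).2, mem_filter.mpr ⟨hA, (mem_inter.mp hy).1⟩⟩
    obtain ⟨S, hSF, hS, Y, hSY⟩ := ih (link F x) (fun T hT => by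
        have := hF _ (mem_link.mp hT).2
        rw [card_insert_of_notMem (mem_link.mp hT).1] at this
        omega) (by rwa [card_link])
    obtain ⟨S', hS'F, hS', hS'Y⟩ := exists_sunflower_of_subset_link hSF hSY
    exact ⟨S', hS'F, hS'.trans hS, hS'Y⟩

end Sunflower

lemma mem_interk {𝒜 : Finset (Finset ℕ)} {k : ℕ} {C : Finset ℕ} :
    C ∈ interk 𝒜 k ↔ (∃ X ∈ 𝒜, ∃ Y ∈ 𝒜, X ∩ Y = C) ∧ #C = k := by
  simp [interk, and_assoc]

lemma mem_interPts {𝒜 : Finset (Finset ℕ)} {x : ℕ} :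
    x ∈ interPts 𝒜 ↔ ∃ X ∈ 𝒜, ∃ Y ∈ 𝒜, X ∩ Y = {x} := by
  simp only [interPts, mem_sup, id_eq, mem_interk, card_eq_one]
  constructor
  · rintro ⟨_, ⟨hC, a, rfl⟩, hx⟩
    rw [mem_singleton] at hx
    exact hx ▸ hC
  · intro h
    exact ⟨{x}, ⟨h, x, rfl⟩, mem_singleton_self x⟩

lemma interk_one_eq_image (𝒜 : Finset (Finset ℕ)) : interk 𝒜 1 = (interPts 𝒜).image singleton := by
  ext C
  simp only [mem_interk, card_eq_one, mem_image, mem_interPts]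
  constructor
  · rintro ⟨h, a, rfl⟩
    exact ⟨a, h, rfl⟩
  · rintro ⟨a, h, rfl⟩
    exact ⟨h, a, rfl⟩

lemma card_interk_one (𝒜 : Finset (Finset ℕ)) : #(interk 𝒜 1) = #(interPts 𝒜) := by
  rw [interk_one_eq_image, card_image_of_injective _ singleton_injective]

lemma interPts_subset {𝒜 : Finset (Finset ℕ)} {U : Finset ℕ} (h : ∀ A ∈ 𝒜, A ⊆ U) :
    interPts 𝒜 ⊆ U := fun x hx => by
  obtain ⟨X, hX, Y, -, hXY⟩ := mem_interPts.mp hx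
  exact h X hX (mem_of_mem_inter_left (hXY ▸ mem_singleton_self x))

lemma grd_subset_grd_succ (N : ℕ) : grd N ⊆ grd (N + 1) := Icc_subset_Icc_right (Nat.le_succ N)

lemma succ_mem_grd_succ (N : ℕ) : N + 1 ∈ grd (N + 1) := mem_Icc.mpr ⟨Nat.succ_pos N, le_rfl⟩

lemma succ_notMem_of_subset_grd {C : Finset ℕ} {N : ℕ} (hC : C ⊆ grd N) : N + 1 ∉ C := fun h => by
  have := mem_Icc.mp (hC h)
  omega

/-- Otherwise `Z` would miss the kernel, hence meet the more than `s` petals in distinct points. -/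
lemma IsSunflower.mem_of_inter_eq_singleton {𝒜 S : Finset (Finset ℕ)} {s : ℕ} {X Y Z : Finset ℕ}
    {x : ℕ} (hI : IsIntersecting 𝒜) (h𝒜 : ∀ A ∈ 𝒜, #A = s) (hS𝒜 : S ⊆ 𝒜) (hSY : IsSunflower S Y)
    (hS : s < #S) (hX : X ∈ S) (hZ : Z ∈ 𝒜) (hXZ : X ∩ Z = {x}) : x ∈ Y := by
  have hxX : x ∈ X := mem_of_mem_inter_left (hXZ ▸ mem_singleton_self x)
  have hs : 0 < s := h𝒜 X (hS𝒜 hX) ▸ card_pos.mpr ⟨x, hxX⟩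
  by_contra hxY
  have hZY : Disjoint Z Y := disjoint_left.mpr fun z hzZ hzY => by
    have : z ∈ X ∩ Z := mem_inter.mpr ⟨hSY.subset_of_mem (by omega) hX hzY, hzZ⟩
    rw [hXZ, mem_singleton] at this
    exact hxY (this ▸ hzY)
  have := hSY.card_le_of_disjoint (fun T hT => hI Z hZ T (hS𝒜 hT)) hZY
  rw [h𝒜 Z hZ] at this
  omega

/-- Lovász's bound: the first members of witnessing pairs contain no sunflower with `s + 1`
petals. -/
theorem card_interPts_le {𝒜 : Finset (Finset ℕ)} {s : ℕ} (hI : IsIntersecting 𝒜)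
    (h𝒜 : ∀ A ∈ 𝒜, #A = s) : #(interPts 𝒜) ≤ s * (s ! * s ^ s) := by
  choose! X hX Z hZ hXZ using fun x (hx : x ∈ interPts 𝒜) => mem_interPts.mp hx
  have hxX : ∀ x ∈ interPts 𝒜, x ∈ X x := fun x hx =>
    mem_of_mem_inter_left ((hXZ x hx).symm ▸ mem_singleton_self x)
  set W := (interPts 𝒜).image X
  have hW𝒜 : W ⊆ 𝒜 := fun _ hT => by
    obtain ⟨x, hx, rfl⟩ := mem_image.mp hT
    exact hX x hx
  refine (card_le_mul_card_image (f := X) _ s fun T hT => ?_).trans (Nat.mul_le_mul_left s ?_)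
  · rw [← h𝒜 T (hW𝒜 hT)]
    exact card_le_card fun x hx => (mem_filter.mp hx).2 ▸ hxX x (mem_filter.mp hx).1
  by_contra! hbig
  obtain ⟨S, hSW, hS, Y, hSY⟩ := exists_sunflower s s W (fun T hT => h𝒜 T (hW𝒜 hT)) hbig
  choose! p hp hpX using fun T (hT : T ∈ W) => mem_image.mp hT
  have hpY : Set.MapsTo p S Y := fun T hT =>
    hSY.mem_of_inter_eq_singleton hI h𝒜 (hSW.trans hW𝒜) (by omega) ((hpX T (hSW hT)).symm ▸ hT)
      (hZ _ (hp T (hSW hT))) (hXZ _ (hp T (hSW hT)))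
  have hpinj : Set.InjOn p S := fun T hT T' hT' h => by
    rw [← hpX T (hSW hT), ← hpX T' (hSW hT'), h]
  obtain ⟨T, hT⟩ := card_pos.mp (show 0 < #S by omega)
  have hpT : p T ∈ T := by simpa only [hpX T (hSW hT)] using hxX _ (hp T (hSW hT))
  have hs : 0 < s := h𝒜 T (hW𝒜 (hSW hT)) ▸ card_pos.mpr ⟨p T, hpT⟩
  have hSY' := card_le_card_of_injOn p hpY hpinj
  have hYT := card_le_card (hSY.subset_of_mem (by omega) hT)
  rw [h𝒜 T (hW𝒜 (hSW hT))] at hYT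
  omega

lemma card_interk_one_le {𝒜 : Finset (Finset ℕ)} {n s : ℕ} (h𝒜 : 𝒜 ⊆ ksets n s)
    (hI : IsIntersecting 𝒜) : #(interk 𝒜 1) ≤ s * (s ! * s ^ s) := by
  rw [card_interk_one]
  exact card_interPts_le hI fun A hA => (mem_powersetCard.mp (h𝒜 hA)).2

lemma beta_one_le (n s : ℕ) : beta n s 1 ≤ s * (s ! * s ^ s) :=
  csSup_le ⟨0, ∅, empty_subset _, by simp [IsIntersecting], by simp [interk]⟩
    (by rintro m ⟨𝒜, h𝒜, hI, rfl⟩; exact card_interk_one_le h𝒜 hI)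

lemma card_interPts_le_alpha {𝒜 : Finset (Finset ℕ)} {n s : ℕ} (hsn : s ≤ n)
    (h𝒜 : 𝒜 ⊆ ksets n s) (hI : IsIntersecting 𝒜) : #(interPts 𝒜) ≤ alpha s :=
  calc #(interPts 𝒜) = #(interk 𝒜 1) := (card_interk_one 𝒜).symm
    _ ≤ beta n s 1 := le_csSup ⟨_, by rintro m ⟨𝒜, h𝒜, hI, rfl⟩; exact card_interk_one_le h𝒜 hI⟩
        ⟨𝒜, h𝒜, hI, rfl⟩
    _ ≤ alpha s := le_csSup ⟨_, by rintro m ⟨n', -, rfl⟩; exact beta_one_le n' s⟩ ⟨n, hsn, rfl⟩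

lemma disjoint_Ico_blocks {a b c s t t' : ℕ} (hab : a ≠ b) (ht : t ≤ s) (ht' : t' ≤ s) :
    Disjoint (Ico (c + a * s) (c + a * s + t)) (Ico (c + b * s) (c + b * s + t')) := by
  rw [disjoint_left]
  intro z hz hz'
  rw [mem_Ico] at hz hz'
  rcases Nat.lt_or_gt_of_ne hab with h | h
  · have := Nat.mul_le_mul_right s (Nat.succ_le_of_lt h)
    rw [Nat.succ_mul] at this
    omega
  · have := Nat.mul_le_mul_right s (Nat.succ_le_of_lt h)
    rw [Nat.succ_mul] at this
    omega

lemma exists_uniform_padding {ι : Type*} [Fintype ι] {N s : ℕ} (F : ι → Finset ℕ)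
    (hF : ∀ i, F i ⊆ grd N) (hFs : ∀ i, #(F i) ≤ s) :
    ∃ M, s ≤ M ∧ ∃ G : ι → Finset ℕ, (∀ i, G i ∈ ksets M s) ∧ (∀ i, F i ⊆ G i) ∧
      ∀ i j, i ≠ j → G i ∩ G j = F i ∩ F j := by
  set e := Fintype.equivFin ι
  set pad : ι → Finset ℕ := fun i => Ico (N + 1 + e i * s) (N + 1 + e i * s + (s - #(F i)))
  have hFN : ∀ i, ∀ z ∈ F i, z ≤ N := fun i z hz => (mem_Icc.mp (hF i hz)).2
  have hpadN : ∀ i, ∀ z ∈ pad i, N < z := fun i z hz => by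
    simp only [pad, mem_Ico] at hz
    omega
  have hdisj : ∀ i j, Disjoint (F i) (pad j) := fun i j =>
    disjoint_left.mpr fun z hz hz' => by have := hFN i z hz; have := hpadN j z hz'; omega
  refine ⟨N + (Fintype.card ι + 1) * s, by nlinarith, fun i => F i ∪ pad i, fun i => ?_,
    fun i => subset_union_left, fun i j hij => ?_⟩
  · refine mem_powersetCard.mpr ⟨union_subset (fun z hz => ?_) fun z hz => ?_, ?_⟩
    · have := mem_Icc.mp (hF i hz)
      exact mem_Icc.mpr ⟨this.1, by nlinarith⟩
    · have hei : e i * s + s ≤ (Fintype.card ι + 1) * s := by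
        have := Nat.mul_le_mul_right s (Nat.succ_le_of_lt (e i).isLt)
        rw [Nat.succ_mul] at this
        nlinarith
      simp only [pad, mem_Ico] at hz
      exact mem_Icc.mpr ⟨by omega, by omega⟩
    · rw [card_union_of_disjoint (hdisj i i), Nat.card_Ico]
      have := hFs i
      omega
  · have hpp : Disjoint (pad i) (pad j) :=
      disjoint_Ico_blocks (fun h => hij (e.injective (Fin.ext h))) (Nat.sub_le _ _)
        (Nat.sub_le _ _)
    rw [union_inter_distrib_right, inter_union_distrib_left, inter_union_distrib_left,
      disjoint_iff_inter_eq_empty.mp (hdisj i j), disjoint_iff_inter_eq_empty.mp hpp,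
      inter_comm (pad i), disjoint_iff_inter_eq_empty.mp (hdisj j i)]
    simp

theorem card_le_alpha_of_family {ι : Type*} [Fintype ι] {N s : ℕ} (F : ι → Finset ℕ)
    (hF : ∀ i, F i ⊆ grd N) (hFs : ∀ i, #(F i) ≤ s) (hFI : ∀ i j, (F i ∩ F j).Nonempty)
    {Q : Finset ℕ} (hQ : ∀ x ∈ Q, ∃ i j, i ≠ j ∧ F i ∩ F j = {x}) : #Q ≤ alpha s := by
  classical
  obtain ⟨M, hsM, G, hG, hFG, hGF⟩ := exists_uniform_padding F hF hFs
  refine (card_le_card fun x hx => ?_).trans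
    (card_interPts_le_alpha hsM (𝒜 := univ.image G) ?_ ?_)
  · obtain ⟨i, j, hij, h⟩ := hQ x hx
    exact mem_interPts.mpr
      ⟨G i, mem_image_of_mem _ (mem_univ _), G j, mem_image_of_mem _ (mem_univ _),
        (hGF i j hij).trans h⟩
  · rintro _ hA
    obtain ⟨i, -, rfl⟩ := mem_image.mp hA
    exact hG i
  · rintro _ hA _ hB
    obtain ⟨i, -, rfl⟩ := mem_image.mp hA
    obtain ⟨j, -, rfl⟩ := mem_image.mp hB
    exact (hFI i j).mono (inter_subset_inter (hFG i) (hFG j))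

theorem card_interPts_lt_alpha_of_pair {𝒞 : Finset (Finset ℕ)} {N s : ℕ} {E₁ E₂ : Finset ℕ}
    {ω : ℕ} (h𝒞 : ∀ C ∈ 𝒞, C ⊆ grd N ∧ #C ≤ s) (hI : IsIntersecting 𝒞)
    (hE₁ : E₁ ⊆ grd N ∧ #E₁ ≤ s) (hE₂ : E₂ ⊆ grd N ∧ #E₂ ≤ s)
    (hE₁𝒞 : ∀ C ∈ 𝒞, (E₁ ∩ C).Nonempty) (hE₂𝒞 : ∀ C ∈ 𝒞, (E₂ ∩ C).Nonempty)
    (hE : E₁ ∩ E₂ = {ω}) (hω : ω ∉ interPts 𝒞) : #(interPts 𝒞) < alpha s := by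
  -- two copies of `𝒞`, so that `X ∩ X = {x}` is also realised by two distinct indices
  let F : Bool × Option 𝒞 → Finset ℕ
    | (_, some C) => C
    | (true, none) => E₁
    | (false, none) => E₂
  have hF : ∀ i, F i ⊆ grd N ∧ #(F i) ≤ s := by
    rintro ⟨_ | _, _ | ⟨C, hC⟩⟩
    exacts [hE₂, h𝒞 C hC, hE₁, h𝒞 C hC]
  have hF𝒞 : ∀ i, ∀ C ∈ 𝒞, (F i ∩ C).Nonempty := by
    rintro ⟨_ | _, _ | ⟨C', hC'⟩⟩ C hC
    exacts [hE₂𝒞 C hC, hI C' hC' C hC, hE₁𝒞 C hC, hI C' hC' C hC]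
  have hωF : ∀ b, ω ∈ F (b, none) := by
    have := hE ▸ mem_singleton_self ω
    rintro (_ | _)
    exacts [mem_of_mem_inter_right this, mem_of_mem_inter_left this]
  have hFI : ∀ i j, (F i ∩ F j).Nonempty := by
    rintro i ⟨b, _ | ⟨C, hC⟩⟩
    · rcases i with ⟨b', _ | ⟨C', hC'⟩⟩
      · exact ⟨ω, mem_inter.mpr ⟨hωF b', hωF b⟩⟩
      · exact inter_comm (F _) _ ▸ hF𝒞 (b, none) C' hC'
    · exact hF𝒞 i C hC
  have := card_le_alpha_of_family F (fun i => (hF i).1) (fun i => (hF i).2) hFI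
    (Q := insert ω (interPts 𝒞)) fun x hx => by
      rcases mem_insert.mp hx with rfl | hx
      · exact ⟨(true, none), (false, none), by simp, hE⟩
      · obtain ⟨X, hX, Y, hY, hXY⟩ := mem_interPts.mp hx
        exact ⟨(true, some ⟨X, hX⟩), (false, some ⟨Y, hY⟩), by simp, hXY⟩
  rwa [card_insert_of_notMem hω] at this

/-- A pair `X, Y` with `X ∩ Y ⊆ D` and `|X ∩ Y|` minimal: trimming `X` to `(X \ Y) ∪ {y}` keeps it
meeting all of `𝒞`, by minimality, and makes `y ∈ D` a new singleton intersection. -/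
theorem card_interPts_lt_alpha_of_inter_subset {𝒞 : Finset (Finset ℕ)} {N s : ℕ}
    {D : Finset ℕ} (h𝒞 : ∀ C ∈ 𝒞, C ⊆ grd N ∧ #C ≤ s) (hI : IsIntersecting 𝒞)
    (hD : Disjoint D (interPts 𝒞)) (hXY : ∃ X ∈ 𝒞, ∃ Y ∈ 𝒞, X ∩ Y ⊆ D) :
    #(interPts 𝒞) < alpha s := by
  obtain ⟨X, hX, Y, hY, hXYD⟩ := hXY
  obtain ⟨⟨X, Y⟩, hXY, hmin⟩ := exists_min_image ((𝒞 ×ˢ 𝒞).filter fun p => p.1 ∩ p.2 ⊆ D)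
    (fun p => #(p.1 ∩ p.2)) ⟨(X, Y), mem_filter.mpr ⟨mem_product.mpr ⟨hX, hY⟩, hXYD⟩⟩
  simp only [mem_filter, mem_product] at hXY hmin
  obtain ⟨⟨hX, hY⟩, hXYD⟩ := hXY
  obtain ⟨y, hy⟩ := hI X hX Y hY
  obtain ⟨hyX, hyY⟩ := mem_inter.mp hy
  have hEX : insert y (X \ Y) ⊆ X := insert_subset hyX sdiff_subset
  refine card_interPts_lt_alpha_of_pair h𝒞 hI
    ⟨hEX.trans (h𝒞 X hX).1, (card_le_card hEX).trans (h𝒞 X hX).2⟩ (h𝒞 Y hY)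
    (fun Z hZ => ?_) (hI Y hY) ?_ (disjoint_left.mp hD (hXYD hy))
  · by_contra hEZ
    have hXZ : X ∩ Z ⊆ (X ∩ Y).erase y := fun z hz => by
      obtain ⟨hzX, hzZ⟩ := mem_inter.mp hz
      by_cases hzY : z ∈ Y
      · refine mem_erase.mpr ⟨fun hzy => hEZ ⟨z, ?_⟩, mem_inter.mpr ⟨hzX, hzY⟩⟩
        exact mem_inter.mpr ⟨hzy ▸ mem_insert_self z _, hzZ⟩
      · exact absurd ⟨z, mem_inter.mpr ⟨mem_insert_of_mem (mem_sdiff.mpr ⟨hzX, hzY⟩), hzZ⟩⟩ hEZ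
    have hle : #(X ∩ Y) ≤ #(X ∩ Z) :=
      hmin (X, Z) ⟨⟨hX, hZ⟩, hXZ.trans ((erase_subset y _).trans hXYD)⟩
    have hlt := card_le_card hXZ
    rw [card_erase_of_mem hy] at hlt
    have := card_pos.mpr ⟨y, hy⟩
    omega
  · rw [insert_inter_of_mem hyY, sdiff_inter_self, insert_empty]

theorem card_interPts_lt_alpha_of_disjoint_transversals {𝒞 : Finset (Finset ℕ)} {N s : ℕ}
    {S T : Finset ℕ} (h𝒞 : ∀ C ∈ 𝒞, C ⊆ grd N ∧ #C ≤ s) (hI : IsIntersecting 𝒞)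
    (hS : S ⊆ grd N) (hT : T ⊆ grd N) (hSs : #S + 1 ≤ s) (hTs : #T + 1 ≤ s) (hST : Disjoint S T)
    (hS𝒞 : ∀ C ∈ 𝒞, (S ∩ C).Nonempty) (hT𝒞 : ∀ C ∈ 𝒞, (T ∩ C).Nonempty) :
    #(interPts 𝒞) < alpha s := by
  have hgrd := grd_subset_grd_succ N
  have hω := succ_mem_grd_succ N
  refine card_interPts_lt_alpha_of_pair (ω := N + 1)
    (fun C hC => ⟨(h𝒞 C hC).1.trans hgrd, (h𝒞 C hC).2⟩) hI
    ⟨insert_subset hω (hS.trans hgrd), (card_insert_le _ _).trans hSs⟩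
    ⟨insert_subset hω (hT.trans hgrd), (card_insert_le _ _).trans hTs⟩
    (fun C hC => (hS𝒞 C hC).mono (inter_subset_inter (subset_insert _ _) subset_rfl))
    (fun C hC => (hT𝒞 C hC).mono (inter_subset_inter (subset_insert _ _) subset_rfl)) ?_ ?_
  · rw [← insert_inter_distrib, disjoint_iff_inter_eq_empty.mp hST, insert_empty]
  · exact succ_notMem_of_subset_grd (interPts_subset fun C hC => (h𝒞 C hC).1)

section Retarget

variable {α : Type*} [DecidableEq α] {S D C T : Finset α} {p z : α}

def retarget (S D : Finset α) (p : α) (C : Finset α) : Finset α :=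
  if Disjoint C S then insert p (C \ D) else C

lemma sdiff_subset_retarget : C \ D ⊆ retarget S D p C := by
  unfold retarget
  split_ifs
  exacts [subset_insert p _, sdiff_subset]

lemma sdiff_subset_retarget_inter {X Y : Finset α} {q : α} :
    (X ∩ Y) \ D ⊆ retarget S D p X ∩ retarget S D q Y := fun z hz => by
  obtain ⟨hz, hzD⟩ := mem_sdiff.mp hz
  exact mem_inter.mpr ⟨sdiff_subset_retarget (mem_sdiff.mpr ⟨(mem_inter.mp hz).1, hzD⟩),
    sdiff_subset_retarget (mem_sdiff.mpr ⟨(mem_inter.mp hz).2, hzD⟩)⟩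

lemma retarget_subset : retarget S D p C ⊆ insert p C := by
  unfold retarget
  split_ifs
  exacts [insert_subset_insert p sdiff_subset, subset_insert p C]

lemma mem_or_of_mem_retarget (hz : z ∈ retarget S D p C) : z ∈ C ∨ Disjoint C S ∧ z = p := by
  unfold retarget at hz
  split_ifs at hz with h
  · rcases mem_insert.mp hz with rfl | hz
    exacts [Or.inr ⟨h, rfl⟩, Or.inl (mem_sdiff.mp hz).1]
  · exact Or.inl hz

lemma card_retarget_le (h : Disjoint C S → (C ∩ D).Nonempty) : #(retarget S D p C) ≤ #C := by
  unfold retarget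
  split_ifs with hCS
  · have := card_sdiff_add_card_inter C D
    have := card_pos.mpr (h hCS)
    exact (card_insert_le p _).trans (by omega)
  · rfl

lemma retarget_inter_nonempty (hST : S ⊆ T) (hp : p ∈ T) : (retarget S D p C ∩ T).Nonempty := by
  unfold retarget
  split_ifs with hCS
  · exact ⟨p, mem_inter.mpr ⟨mem_insert_self p _, hp⟩⟩
  · obtain ⟨z, hz⟩ := not_disjoint_iff_nonempty_inter.mp hCS
    exact ⟨z, mem_inter.mpr ⟨(mem_inter.mp hz).1, hST (mem_inter.mp hz).2⟩⟩

lemma insert_inter_retarget_of_disjoint (h : Disjoint C S) :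
    insert p S ∩ retarget S D p C = {p} := by
  rw [retarget, if_pos h, ← insert_inter_distrib,
    disjoint_iff_inter_eq_empty.mp (h.symm.mono_right sdiff_subset), insert_empty]

lemma retarget_inter_retarget_eq_singleton {X Y : Finset α} {x q : α} (hXY : X ∩ Y = {x})
    (hxD : x ∉ D) (hqX : q ∉ X) (hpq : p ≠ q) (hpY : Disjoint X S → p ∉ Y) :
    retarget S D p X ∩ retarget S D q Y = {x} := by
  refine eq_singleton_iff_unique_mem.mpr
    ⟨sdiff_subset_retarget_inter (mem_sdiff.mpr ⟨hXY ▸ mem_singleton_self x, hxD⟩), fun z hz => ?_⟩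
  obtain ⟨hzX, hzY⟩ := mem_inter.mp hz
  have hzY' : z ∈ Y := by
    rcases mem_insert.mp (retarget_subset hzY) with rfl | hzY
    · rcases mem_or_of_mem_retarget hzX with hzX | ⟨-, rfl⟩
      exacts [absurd hzX hqX, absurd rfl hpq]
    · exact hzY
  rcases mem_or_of_mem_retarget hzX with hzX | ⟨hXS, rfl⟩
  · exact mem_singleton.mp (hXY ▸ mem_inter.mpr ⟨hzX, hzY'⟩)
  · exact absurd hzY' (hpY hXS)

end Retarget

/-- The sets of `𝒞` missing `S` meet `D`; such a set `C` is replaced by its two retargets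
`(C \ D) ∪ {ω}` and `(C \ D) ∪ {a}` (points of `𝒞⟨1⟩` lie outside `D`, so they survive), and
`S ∪ {ω}` is added, which meets a retarget through `ω` only in `ω`. -/
theorem card_interPts_lt_alpha_of_retarget {𝒞 : Finset (Finset ℕ)} {N s : ℕ}
    {D S : Finset ℕ} {a : ℕ} (h𝒞 : ∀ C ∈ 𝒞, C ⊆ grd N ∧ #C ≤ s) (hS : S ⊆ grd N)
    (hSs : #S + 1 ≤ s) (ha : a ∈ S) (hout : ∀ X ∈ 𝒞, ∀ Y ∈ 𝒞, ¬X ∩ Y ⊆ D)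
    (hD : Disjoint D (interPts 𝒞)) (hmeet : ∀ C ∈ 𝒞, Disjoint C S → (C ∩ D).Nonempty)
    (hC₀ : ∃ C ∈ 𝒞, Disjoint C S) : #(interPts 𝒞) < alpha s := by
  obtain ⟨C₀, hC₀, hC₀S⟩ := hC₀
  set ω := N + 1
  have hgrd := grd_subset_grd_succ N
  have hωgrd := succ_mem_grd_succ N
  have hωC : ∀ C ∈ 𝒞, ω ∉ C := fun C hC => succ_notMem_of_subset_grd (h𝒞 C hC).1
  have hωP : ω ∉ interPts 𝒞 := succ_notMem_of_subset_grd (interPts_subset fun C hC => (h𝒞 C hC).1)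
  have haω : a ≠ ω := ne_of_mem_of_not_mem ha (succ_notMem_of_subset_grd hS)
  let F : Option (Bool × 𝒞) → Finset ℕ
    | none => insert ω S
    | some (b, C) => retarget S D (if b then ω else a) C
  have hF : ∀ i, F i ⊆ grd ω ∧ #(F i) ≤ s := by
    rintro (_ | ⟨b, C, hC⟩)
    · exact ⟨insert_subset hωgrd (hS.trans hgrd), (card_insert_le ω S).trans hSs⟩
    · refine ⟨retarget_subset.trans (insert_subset ?_ ((h𝒞 C hC).1.trans hgrd)),
        (card_retarget_le (hmeet C hC)).trans (h𝒞 C hC).2⟩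
      cases b
      exacts [hgrd (hS ha), hωgrd]
  have hFI : ∀ i j, (F i ∩ F j).Nonempty := by
    have hnone : ∀ i, (F i ∩ insert ω S).Nonempty := by
      rintro (_ | ⟨b, C, hC⟩)
      · exact ⟨ω, by simp [F]⟩
      · refine retarget_inter_nonempty (subset_insert ω S) ?_
        cases b
        exacts [mem_insert_of_mem ha, mem_insert_self ω S]
    rintro i (_ | ⟨b, Y, hY⟩)
    · exact hnone i
    rcases i with _ | ⟨b', X, hX⟩
    · rw [inter_comm]
      exact hnone (some (b, ⟨Y, hY⟩))
    · exact (sdiff_nonempty.mpr (hout X hX Y hY)).mono sdiff_subset_retarget_inter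
  have hsurvive : ∀ X ∈ 𝒞, ∀ Y, ∀ x ∈ interPts 𝒞, X ∩ Y = {x} →
      (Disjoint X S → a ∉ Y) → retarget S D a X ∩ retarget S D ω Y = {x} :=
    fun X hX Y x hx hXY =>
      retarget_inter_retarget_eq_singleton hXY (disjoint_right.mp hD hx) (hωC X hX) haω
  have := card_le_alpha_of_family F (fun i => (hF i).1) (fun i => (hF i).2) hFI
    (Q := insert ω (interPts 𝒞)) fun x hx => by
      rcases mem_insert.mp hx with rfl | hx
      · exact ⟨none, some (true, ⟨C₀, hC₀⟩), by simp, insert_inter_retarget_of_disjoint hC₀S⟩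
      obtain ⟨X, hX, Y, hY, hXY⟩ := mem_interPts.mp hx
      by_cases haY : a ∈ Y
      · refine ⟨some (false, ⟨Y, hY⟩), some (true, ⟨X, hX⟩), by simp, ?_⟩
        exact hsurvive Y hY X x hx (inter_comm X Y ▸ hXY)
          fun hYS => absurd ha (disjoint_left.mp hYS haY)
      · exact ⟨some (false, ⟨X, hX⟩), some (true, ⟨Y, hY⟩), by simp,
          hsurvive X hX Y x hx hXY fun _ => haY⟩
  rwa [card_insert_of_notMem hωP] at this

lemma card_interPts_lt_alpha_of_disjoint_sdiff {𝒞 : Finset (Finset ℕ)} {N s : ℕ}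
    {A B : Finset ℕ} (h𝒞 : ∀ C ∈ 𝒞, C ⊆ grd N ∧ #C ≤ s) (hA : A ⊆ grd N)
    (hAs : #(A \ B) + 1 ≤ s) (h𝒞A : ∀ C ∈ 𝒞, (C ∩ A).Nonempty)
    (hout : ∀ X ∈ 𝒞, ∀ Y ∈ 𝒞, ¬X ∩ Y ⊆ A ∩ B) (hD : Disjoint (A ∩ B) (interPts 𝒞))
    (hC₀ : ∃ C ∈ 𝒞, Disjoint C (A \ B)) : #(interPts 𝒞) < alpha s := by
  have hmeet : ∀ C ∈ 𝒞, Disjoint C (A \ B) → (C ∩ (A ∩ B)).Nonempty := fun C hC hCA => by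
    obtain ⟨z, hz⟩ := h𝒞A C hC
    obtain ⟨hzC, hzA⟩ := mem_inter.mp hz
    have hzB : z ∈ B := by_contra fun hzB => disjoint_left.mp hCA hzC (mem_sdiff.mpr ⟨hzA, hzB⟩)
    exact ⟨z, mem_inter.mpr ⟨hzC, mem_inter.mpr ⟨hzA, hzB⟩⟩⟩
  obtain ⟨a, ha⟩ | hAB := (A \ B).eq_empty_or_nonempty.symm
  · exact card_interPts_lt_alpha_of_retarget h𝒞 (sdiff_subset.trans hA) hAs ha hout hD hmeet hC₀
  -- `A ⊆ B`: every member meets `A ∩ B`, and the role of `A \ B` is taken by a fresh point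
  rw [sdiff_eq_empty_iff_subset] at hAB
  obtain ⟨C₀, hC₀, -⟩ := hC₀
  have hs : 2 ≤ s := by
    obtain ⟨z, hz⟩ := sdiff_nonempty.mpr (hout C₀ hC₀ C₀ hC₀)
    obtain ⟨d, hd⟩ := hmeet C₀ hC₀
      (by rw [sdiff_eq_empty_iff_subset.mpr hAB]; exact disjoint_empty_right _)
    rw [inter_self] at hz
    have : #{z, d} ≤ #C₀ := card_le_card (insert_subset (mem_sdiff.mp hz).1
      (singleton_subset_iff.mpr (mem_inter.mp hd).1))
    rw [card_pair fun h => (mem_sdiff.mp hz).2 (by rw [h]; exact (mem_inter.mp hd).2)] at this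
    exact this.trans (h𝒞 C₀ hC₀).2
  refine card_interPts_lt_alpha_of_retarget (N := N + 1) (S := {N + 1}) (a := N + 1)
    (fun C hC => ⟨(h𝒞 C hC).1.trans (grd_subset_grd_succ N), (h𝒞 C hC).2⟩)
    (singleton_subset_iff.mpr (succ_mem_grd_succ N))
    (by rw [card_singleton]; exact hs) (mem_singleton_self _) hout hD
    (fun C hC _ => (h𝒞A C hC).mono (inter_subset_inter subset_rfl (subset_inter subset_rfl hAB)))
    ⟨C₀, hC₀, disjoint_singleton_right.mpr (succ_notMem_of_subset_grd (h𝒞 C₀ hC₀).1)⟩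

theorem card_interPts_lt_alpha {𝒞 : Finset (Finset ℕ)} {N s : ℕ} {A B : Finset ℕ}
    (h𝒞 : ∀ C ∈ 𝒞, C ⊆ grd N ∧ #C ≤ s) (hA : A ⊆ grd N) (hB : B ⊆ grd N)
    (hAs : #(A \ B) + 1 ≤ s) (hBs : #(B \ A) + 1 ≤ s) (hE : IsIntersecting (𝒞 ∪ {A, B}))
    (hD : Disjoint (A ∩ B) (interPts 𝒞)) : #(interPts 𝒞) < alpha s := by
  have hI : IsIntersecting 𝒞 := fun X hX Y hY => hE X (mem_union_left _ hX) Y (mem_union_left _ hY)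
  have h𝒞A : ∀ C ∈ 𝒞, (C ∩ A).Nonempty := fun C hC => hE C (mem_union_left _ hC) A (by simp)
  have h𝒞B : ∀ C ∈ 𝒞, (C ∩ B).Nonempty := fun C hC => hE C (mem_union_left _ hC) B (by simp)
  by_cases hXY : ∃ X ∈ 𝒞, ∃ Y ∈ 𝒞, X ∩ Y ⊆ A ∩ B
  · exact card_interPts_lt_alpha_of_inter_subset h𝒞 hI hD hXY
  push Not at hXY
  by_cases hCA : ∃ C ∈ 𝒞, Disjoint C (A \ B)
  · exact card_interPts_lt_alpha_of_disjoint_sdiff h𝒞 hA hAs h𝒞A hXY hD hCA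
  by_cases hCB : ∃ C ∈ 𝒞, Disjoint C (B \ A)
  · rw [inter_comm] at hXY hD
    exact card_interPts_lt_alpha_of_disjoint_sdiff h𝒞 hB hBs h𝒞B hXY hD hCB
  push Not at hCA hCB
  exact card_interPts_lt_alpha_of_disjoint_transversals h𝒞 hI (sdiff_subset.trans hA)
    (sdiff_subset.trans hB) hAs hBs disjoint_sdiff_sdiff
    (fun C hC => inter_comm C _ ▸ not_disjoint_iff_nonempty_inter.mp (hCA C hC))
    (fun C hC => inter_comm C _ ▸ not_disjoint_iff_nonempty_inter.mp (hCB C hC))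

theorem stmt_6_general (n r l k : ℕ) (hkl : k ≤ l)
    (A B : Finset ℕ) (hA : A ∈ ksets n r) (hB : B ∈ ksets n r)
    (hD : (A ∩ B).card = l)
    (𝒞 : Finset (Finset ℕ)) (h𝒞 : ∀ C ∈ 𝒞, C ⊆ grd n ∧ C.card ≤ r - k + 1)
    (hE : IsIntersecting (𝒞 ∪ {A, B}))
    (hα : (interPts 𝒞).card = alpha (r - k + 1)) :
    ((A ∩ B) ∩ interPts 𝒞).Nonempty := by
  rw [ksets, mem_powersetCard] at hA hB
  have hAB : #(A \ B) = r - l := by rw [card_sdiff, inter_comm, hD, hA.2]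
  have hBA : #(B \ A) = r - l := by rw [card_sdiff, hD, hB.2]
  by_contra h
  have := card_interPts_lt_alpha h𝒞 hA.1 hB.1 (by omega) (by omega) hE
    (disjoint_iff_inter_eq_empty.mpr (not_nonempty_iff_eq_empty.mp h))
  omega

/-- Lemma 3 (extension lemma): if `A, B ∈ [n]^(r)` with `|A ∩ B| = l`, `𝒞` is a family of subsets
of `[n]` each of size at most `r-k+1` with `|𝒞⟨1⟩| = α^(r-k+1)`, and `𝒞 ∪ {A, B}` is intersecting,
then `A ∩ B` meets `𝒞⟨1⟩`. -/
theorem stmt_6 (n r l k : ℕ) (hk : 1 ≤ k) (hkl : k ≤ l) (hlr : l ≤ r) (hrn : r ≤ n)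
    (A B : Finset ℕ) (hA : A ∈ ksets n r) (hB : B ∈ ksets n r)
    (hD : (A ∩ B).card = l)
    (𝒞 : Finset (Finset ℕ)) (h𝒞 : ∀ C ∈ 𝒞, C ⊆ grd n ∧ C.card ≤ r - k + 1)
    (hE : IsIntersecting (𝒞 ∪ {A, B}))
    (hα : (interPts 𝒞).card = alpha (r - k + 1)) :
    ((A ∩ B) ∩ interPts 𝒞).Nonempty :=
  stmt_6_general n r l k hkl A B hA hB hD 𝒞 h𝒞 hE hα
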